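/- arXiv:1812.02401 — 2 statements merged into one kernel-verified Lean document; each statement's English description precedes it below -/
import Mathlib

section
/- Let θ ∈ ℝ and consider the unnormalized density on (0,∞) × (0,∞) given by f(y₁,y₂) = exp(θ₁ y₁ + θ₂ y₂ + θ y₁ y₂) with θ₁ < 0 and θ₂ < 0. Then ∫∫ f(y₁,y₂) dy₁ dy₂ < ∞ if and only if θ ≤ 0. -/
open MeasureTheory Set

theorem exp_exp_interaction_integrable_iff (θ θ₁ θ₂ : ℝ) (h₁ : θ₁ < 0) (h₂ : θ₂ < 0) :
    IntegrableOn (fun y : ℝ × ℝ => Real.exp (θ₁ * y.1 + θ₂ * y.2 + θ * y.1 * y.2))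
      (Ioi (0:ℝ) ×ˢ Ioi (0:ℝ)) ↔ θ ≤ 0 := by
  constructor
  · intro hInt
    by_contra hθ
    push_neg at hθ
    have hprod : Integrable (fun y : ℝ × ℝ => Real.exp (θ₁ * y.1 + θ₂ * y.2 + θ * y.1 * y.2))
        ((volume.restrict (Ioi (0:ℝ))).prod (volume.restrict (Ioi (0:ℝ)))) := by
      rw [Measure.prod_restrict, ← Measure.volume_eq_prod]
      exact hInt
    have hae := hprod.prod_right_ae
    set M : ℝ := max 1 (-θ₂ / θ) with hM
    -- for y₁ ≥ M, the inner function is not integrable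
    have hbad : ∀ y₁ ∈ Ici M,
        ¬ Integrable (fun y₂ => Real.exp (θ₁ * y₁ + θ₂ * y₂ + θ * y₁ * y₂))
          (volume.restrict (Ioi (0:ℝ))) := by
      intro y₁ hy₁ hIntInner
      have hcoef : 0 ≤ θ₂ + θ * y₁ := by
        have : -θ₂ / θ ≤ y₁ := le_trans (le_max_right _ _) hy₁
        have := (div_le_iff₀ hθ).mp this
        linarith
      have hconst : Integrable (fun _ : ℝ => Real.exp (θ₁ * y₁))
          (volume.restrict (Ioi (0:ℝ))) := by
        apply hIntInner.mono' aestronglyMeasurable_const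
        filter_upwards [ae_restrict_mem measurableSet_Ioi] with y₂ hy₂
        rw [Real.norm_eq_abs, abs_of_pos (Real.exp_pos _), Real.exp_le_exp]
        nlinarith [le_of_lt (mem_Ioi.mp hy₂)]
      rw [integrable_const_iff] at hconst
      rcases hconst with h | h
      · exact absurd h (Real.exp_ne_zero _)
      · have h := h.measure_univ_lt_top; rw [Measure.restrict_apply_univ] at h
        simp [Real.volume_Ioi] at h
    have hnull : volume.restrict (Ioi (0:ℝ)) (Ici M) = 0 := by
      refine measure_mono_null (fun y₁ hy₁ => ?_) (ae_iff.mp hae)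
      exact hbad y₁ hy₁
    rw [Measure.restrict_apply' measurableSet_Ioi] at hnull
    have hM1 : (1:ℝ) ≤ M := le_max_left _ _
    have : Ici (M : ℝ) ∩ Ioi 0 = Ici M := by
      apply inter_eq_left.mpr
      intro x hx
      exact lt_of_lt_of_le (by linarith : (0:ℝ) < M) hx
    rw [this, Real.volume_Ici] at hnull
    exact (ENNReal.top_ne_zero) hnull
  · intro hθ
    -- dominate by exp(θ₁ y₁) * exp(θ₂ y₂)
    have hg : IntegrableOn (fun y : ℝ × ℝ => Real.exp (θ₁ * y.1) * Real.exp (θ₂ * y.2))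
        (Ioi (0:ℝ) ×ˢ Ioi (0:ℝ)) := by
      unfold IntegrableOn
      rw [Measure.volume_eq_prod, ← Measure.prod_restrict]
      have e1 : IntegrableOn (fun x : ℝ => Real.exp (θ₁ * x)) (Ioi (0:ℝ)) := by
        have := exp_neg_integrableOn_Ioi (0:ℝ) (b := -θ₁) (by linarith)
        simpa using this
      have e2 : IntegrableOn (fun x : ℝ => Real.exp (θ₂ * x)) (Ioi (0:ℝ)) := by
        have := exp_neg_integrableOn_Ioi (0:ℝ) (b := -θ₂) (by linarith)
        simpa using this
      exact Integrable.mul_prod e1 e2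
    apply hg.mono'
    · exact (Continuous.aestronglyMeasurable (by continuity)).restrict
    · filter_upwards [ae_restrict_mem (measurableSet_Ioi.prod measurableSet_Ioi)] with y hy
      rcases hy with ⟨hy1, hy2⟩
      rw [Real.norm_eq_abs, abs_of_pos (Real.exp_pos _), ← Real.exp_add, Real.exp_le_exp]
      nlinarith [mul_pos (mem_Ioi.mp hy1) (mem_Ioi.mp hy2)]
end

section
/- Let θ₁₁, θ₂₂ ∈ ℝ and θ₁₂ ∈ ℝ. The sum over all (y₁, y₂) ∈ ℕ × ℕ of exp(θ₁₁ y₁ + θ₂₂ y₂ + θ₁₂ y₁ y₂ - log(y₁!) - log(y₂!)) is finite if and only if θ₁₂ ≤ 0. -/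
open Real Filter

theorem poisson_poisson_summable_iff (θ₁₁ θ₂₂ θ₁₂ : ℝ) :
    Summable (fun y : ℕ × ℕ => Real.exp (θ₁₁ * y.1 + θ₂₂ * y.2 + θ₁₂ * y.1 * y.2
      - Real.log (Nat.factorial y.1) - Real.log (Nat.factorial y.2))) ↔ θ₁₂ ≤ 0 := by
  constructor
  · intro hs
    by_contra h
    push_neg at h
    have hdiag : Summable ((fun y : ℕ × ℕ => Real.exp (θ₁₁ * y.1 + θ₂₂ * y.2 + θ₁₂ * y.1 * y.2
        - Real.log (Nat.factorial y.1) - Real.log (Nat.factorial y.2))) ∘ (fun n : ℕ => (n, n))) :=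
      hs.comp_injective (fun a b hab => congrArg Prod.fst hab)
    have h0 := hdiag.tendsto_atTop_zero
    have key : ∀ᶠ x : ℝ in atTop, 2 * Real.log x ≤ θ₁₂ * x + (θ₁₁ + θ₂₂) := by
      have h4 : θ₁₂ / 4 ≠ 0 := by positivity
      have hl := Real.tendsto_pow_log_div_mul_add_atTop (θ₁₂/4) 0 1 h4
      have h1 : ∀ᶠ x : ℝ in atTop, Real.log x ^ 1 / (θ₁₂/4 * x + 0) < 1 :=
        hl.eventually_lt_const one_pos
      filter_upwards [h1, eventually_ge_atTop (max 1 (2 * |θ₁₁ + θ₂₂| / θ₁₂))] with x hx hx'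
      have hx1 : (1:ℝ) ≤ x := le_trans (le_max_left _ _) hx'
      have hx2 : 2 * |θ₁₁ + θ₂₂| / θ₁₂ ≤ x := le_trans (le_max_right _ _) hx'
      have hden : 0 < θ₁₂/4 * x := by positivity
      rw [pow_one, add_zero, div_lt_one hden] at hx
      have habs : -|θ₁₁ + θ₂₂| ≤ θ₁₁ + θ₂₂ := neg_abs_le _
      have : 2 * |θ₁₁ + θ₂₂| ≤ θ₁₂ * x := by
        rw [div_le_iff₀ h] at hx2; linarith
      linarith
    have hev : ∀ᶠ n : ℕ in atTop, (1:ℝ) ≤ Real.exp (θ₁₁ * n + θ₂₂ * n + θ₁₂ * n * n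
        - Real.log (Nat.factorial n) - Real.log (Nat.factorial n)) := by
      filter_upwards [tendsto_natCast_atTop_atTop.eventually key, eventually_ge_atTop 1] with n hn hn1
      have hnn : (1:ℝ) ≤ (n:ℝ) := by exact_mod_cast hn1
      have hfact : Real.log (Nat.factorial n) ≤ n * Real.log n := by
        have hle : ((Nat.factorial n : ℕ) : ℝ) ≤ ((n ^ n : ℕ) : ℝ) := by
          exact_mod_cast Nat.factorial_le_pow n
        calc Real.log (Nat.factorial n) ≤ Real.log ((n ^ n : ℕ) : ℝ) :=
              Real.log_le_log (by positivity) hle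
          _ = n * Real.log n := by push_cast; rw [Real.log_pow]
      have hkey : 2 * Real.log n ≤ θ₁₂ * n + (θ₁₁ + θ₂₂) := hn
      have hmul : (n:ℝ) * (2 * Real.log n) ≤ (n:ℝ) * (θ₁₂ * n + (θ₁₁ + θ₂₂)) :=
        mul_le_mul_of_nonneg_left hkey (by linarith)
      rw [show (1:ℝ) = Real.exp 0 from (Real.exp_zero).symm]
      apply Real.exp_le_exp.mpr
      nlinarith
    have := (h0.eventually_lt_const (show (0:ℝ) < 1 by norm_num)).and hev
    obtain ⟨n, hn1, hn2⟩ := this.exists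
    simp only [Function.comp] at hn1
    linarith
  · intro h
    have mk : ∀ θ : ℝ, Summable (fun n : ℕ => Real.exp (θ * n - Real.log (Nat.factorial n))) := by
      intro θ
      have heq : (fun n : ℕ => Real.exp (θ * n - Real.log (Nat.factorial n)))
          = fun n : ℕ => Real.exp θ ^ n / (Nat.factorial n : ℝ) := by
        funext n
        rw [Real.exp_sub, Real.exp_log (by positivity : (0:ℝ) < (Nat.factorial n : ℝ)),
          ← Real.exp_nat_mul, mul_comm]
      rw [heq]
      exact Real.summable_pow_div_factorial _
    have hprod := (mk θ₁₁).mul_of_nonneg (mk θ₂₂) (fun _ => (Real.exp_pos _).le)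
      (fun _ => (Real.exp_pos _).le)
    refine hprod.of_nonneg_of_le (fun y => (Real.exp_pos _).le) fun y => ?_
    rw [← Real.exp_add]
    apply Real.exp_le_exp.mpr
    have hy : θ₁₂ * y.1 * y.2 ≤ 0 := by
      have h0 : (0:ℝ) ≤ (y.1 : ℝ) * y.2 := by positivity
      nlinarith
    linarith
end
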